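/- arXiv:2601.17832 — 5 statements merged into one kernel-verified Lean document; each statement's English description precedes it below -/
import Mathlib

section
/- Let n, U, S be positive integers with n > 1, n ≤ U, σ(n) ≥ S, and suppose the smallest prime factor of n is the k-th prime 𝔭_k (primes indexed in increasing order: 𝔭_1 = 2, 𝔭_2 = 3, …). Then for every positive integer ℓ with ℓ ≥ ω(n), one has ∏_{i=1}^{ℓ} 𝔭_{k+i-1}/(𝔭_{k+i-1} - 1) ≥ S/U (as an inequality of rational numbers). -/
/-!
Since `σ` is multiplicative and `σ(p^a) = (p^(a+1) - 1)/(p - 1) < p^a · p/(p - 1)`, one has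
`σ(n)/n ≤ ∏_{p ∣ n} p/(p - 1)`. All prime factors of `n` are at least `𝔭_k`, so its `i`-th smallest
one is at least `𝔭_{k+i}`; as `p/(p - 1)` decreases in `p` and is at least `1`, the product over
the prime factors is at most the product over `ℓ ≥ ω(n)` consecutive primes from `𝔭_k` on.
-/

open ArithmeticFunction Finset
open scoped ArithmeticFunction.sigma

section PrimeRatio

variable {K : Type*} [Field K] [LinearOrder K] [IsStrictOrderedRing K]

lemma one_le_prime_div_sub_one {p : ℕ} (hp : p.Prime) : (1 : K) ≤ p / ((p : K) - 1) := by
  have hp1 : (1 : K) < p := by exact_mod_cast hp.one_lt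
  exact (one_le_div (by linarith)).2 (by linarith)

lemma antitoneOn_primes_div_sub_one :
    AntitoneOn (fun p : ℕ => (p : K) / ((p : K) - 1)) {p | p.Prime} := by
  intro p hp q _ hpq
  have hp1 : (1 : K) < p := by exact_mod_cast hp.one_lt
  have hpq' : (p : K) ≤ q := by exact_mod_cast hpq
  dsimp only
  rw [div_le_div_iff₀ (by linarith) (by linarith)]
  nlinarith

lemma sigma_one_prime_pow_le {p : ℕ} (hp : p.Prime) (a : ℕ) :
    (σ 1 (p ^ a) : K) ≤ (p : K) ^ a * ((p : K) / ((p : K) - 1)) := by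
  have hp1 : (1 : K) < p := by exact_mod_cast hp.one_lt
  have hgeom : (σ 1 (p ^ a) : K) * ((p : K) - 1) = (p : K) ^ (a + 1) - 1 := by
    rw [sigma_one_apply_prime_pow hp]
    push_cast
    exact geom_sum_mul _ _
  rw [mul_div_assoc', le_div_iff₀ (by linarith), hgeom, pow_succ]
  linarith

lemma sigma_one_le_mul_prod_primeFactors {n : ℕ} (hn : n ≠ 0) :
    (σ 1 n : K) ≤ n * ∏ p ∈ n.primeFactors, (p : K) / ((p : K) - 1) := by
  calc (σ 1 n : K) = ∏ p ∈ n.primeFactors, (σ 1 (p ^ n.factorization p) : K) := by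
        rw [isMultiplicative_sigma.multiplicative_factorization _ hn, Finsupp.prod,
          Nat.support_factorization]
        push_cast
        rfl
    _ ≤ ∏ p ∈ n.primeFactors, ((p : K) ^ n.factorization p * ((p : K) / ((p : K) - 1))) :=
        prod_le_prod (fun _ _ => by positivity)
          (fun p hp => sigma_one_prime_pow_le (Nat.prime_of_mem_primeFactors hp) _)
    _ = n * ∏ p ∈ n.primeFactors, (p : K) / ((p : K) - 1) := by
        rw [prod_mul_distrib]
        congr
        exact_mod_cast Nat.prod_factorization_pow_eq_self hn

end PrimeRatio

lemma Nat.nth_prime_succ_le_of_lt {k p : ℕ} (hp : p.Prime) (hkp : Nat.nth Nat.Prime k < p) :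
    Nat.nth Nat.Prime (k + 1) ≤ p := by
  by_contra! h
  exact (Nat.le_nth_of_lt_nth_succ h hp).not_gt hkp

lemma prod_le_prod_range_nth_prime {M : Type*} [CommMonoidWithZero M] [PartialOrder M]
    [ZeroLEOneClass M] [PosMulMono M] [MulPosMono M] {f : ℕ → M}
    (hf0 : ∀ p, p.Prime → 0 ≤ f p) (hf : AntitoneOn f {p | p.Prime})
    (s : Finset ℕ) {k : ℕ} (hs : ∀ p ∈ s, p.Prime ∧ Nat.nth Nat.Prime k ≤ p) :
    ∏ p ∈ s, f p ≤ ∏ i ∈ range #s, f (Nat.nth Nat.Prime (k + i)) := by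
  -- Peel off the minimum `a ≥ 𝔭_k`; the remaining primes exceed `a`, hence are `≥ 𝔭_{k+1}`.
  induction s using Finset.induction_on_min generalizing k with
  | empty => simp
  | insert a s has ih =>
    have ha : a ∉ s := fun h => (has a h).false
    obtain ⟨ha_prime, hka⟩ := hs a (mem_insert_self a s)
    have hs' : ∀ p ∈ s, p.Prime ∧ Nat.nth Nat.Prime (k + 1) ≤ p := fun p hp =>
      have hp_prime := (hs p (mem_insert_of_mem hp)).1
      ⟨hp_prime, Nat.nth_prime_succ_le_of_lt hp_prime (hka.trans_lt (has p hp))⟩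
    have hfs : ∏ p ∈ s, f p ≤ ∏ i ∈ range #s, f (Nat.nth Nat.Prime (k + (i + 1))) := by
      simpa only [add_right_comm k 1, add_assoc] using ih hs'
    rw [prod_insert ha, card_insert_of_notMem ha, prod_range_succ', add_zero, mul_comm]
    exact mul_le_mul hfs (hf (Nat.prime_nth_prime k) ha_prime hka) (hf0 a ha_prime)
      (prod_nonneg fun i _ => hf0 _ (Nat.prime_nth_prime _))

open ArithmeticFunction ArithmeticFunction.sigma in
/-- `Nat.nth Nat.Prime` is 0-indexed (`Nat.nth Nat.Prime 0 = 2`), so `k` is the paper's `k - 1`. -/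
theorem prod_consecutive_primes_ratio_ge_of_omega_le_general (n U S k : ℕ)
    (hn : 1 < n) (hnU : n ≤ U) (hS : S ≤ σ 1 n)
    (hk : n.minFac = Nat.nth Nat.Prime k) :
    ∀ ℓ : ℕ, 0 < ℓ → n.primeFactors.card ≤ ℓ →
      (S : ℚ) / U ≤ ∏ i ∈ Finset.range ℓ,
        (Nat.nth Nat.Prime (k + i) : ℚ) / ((Nat.nth Nat.Prime (k + i) : ℚ) - 1) := by
  intro ℓ _ hcard
  have hn0 : (0 : ℚ) < n := Nat.cast_pos.2 (by omega)
  have hfactors : ∀ p ∈ n.primeFactors, p.Prime ∧ Nat.nth Nat.Prime k ≤ p := fun p hp =>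
    have hp_prime := Nat.prime_of_mem_primeFactors hp
    ⟨hp_prime, hk ▸ Nat.minFac_le_of_dvd hp_prime.two_le (Nat.dvd_of_mem_primeFactors hp)⟩
  have hratio_nonneg {p : ℕ} (hp : p.Prime) : (0 : ℚ) ≤ p / ((p : ℚ) - 1) :=
    zero_le_one.trans (one_le_prime_div_sub_one hp)
  calc (S : ℚ) / U ≤ (σ 1 n : ℚ) / n :=
        div_le_div₀ (by positivity) (by exact_mod_cast hS) hn0 (by exact_mod_cast hnU)
    _ ≤ ∏ p ∈ n.primeFactors, (p : ℚ) / ((p : ℚ) - 1) := by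
        rw [div_le_iff₀ hn0, mul_comm]
        exact sigma_one_le_mul_prod_primeFactors (by omega)
    _ ≤ _ := prod_le_prod_range_nth_prime (fun _ => hratio_nonneg)
        antitoneOn_primes_div_sub_one _ hfactors
    _ ≤ _ := prod_le_prod_of_subset_of_one_le (range_subset_range.2 hcard)
        (fun _ _ => hratio_nonneg (Nat.prime_nth_prime _))
        (fun _ _ _ => one_le_prime_div_sub_one (Nat.prime_nth_prime _))

open ArithmeticFunction ArithmeticFunction.sigma in
/-- If `1 < n ≤ U`, `σ(n) ≥ S` (with `U, S` positive), and the smallest prime factor of `n`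
is the `k`-th prime (here 0-indexed: `Nat.nth Nat.Prime 0 = 2`), then for every positive
`ℓ ≥ ω(n)`, the product `∏_{i=0}^{ℓ-1} 𝔭_{k+i}/(𝔭_{k+i}-1)` is at least `S/U` in `ℚ`. -/
theorem prod_consecutive_primes_ratio_ge_of_omega_le (n U S k : ℕ)
    (hn : 1 < n) (hU : 0 < U) (hS0 : 0 < S) (hnU : n ≤ U) (hS : S ≤ σ 1 n)
    (hk : n.minFac = Nat.nth Nat.Prime k) :
    ∀ ℓ : ℕ, 0 < ℓ → n.primeFactors.card ≤ ℓ →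
      (S : ℚ) / U ≤ ∏ i ∈ Finset.range ℓ,
        (Nat.nth Nat.Prime (k + i) : ℚ) / ((Nat.nth Nat.Prime (k + i) : ℚ) - 1) :=
  prod_consecutive_primes_ratio_ge_of_omega_le_general n U S k hn hnU hS hk
end

section
/- Let a, b be integers with gcd(a, b) = 1, let p be a prime, and let k ≥ 2 be an integer such that a · σ(p^k) = b · p^k + a. Then ((a - b)·p + b) · p^(k-1) = a; in particular p^(k-1) divides a and the p-adic valuation of a equals k - 1. -/
open ArithmeticFunction
open scoped ArithmeticFunction.sigma

/-!
Multiplying the hypothesis by `p - 1` turns `σ(p^k)` into `(p^(k+1) - 1) / (p - 1)`, and after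
cancelling a factor `p` the relation becomes `((a - b) p + b) p^(k-1) = a`. For `k ≥ 2` this makes
`p ∣ a`, so `p ∤ b` by coprimality and hence `p ∤ (a - b) p + b`: the whole `p`-part of `a` is
`p^(k-1)`.
-/

theorem ArithmeticFunction.sigma_one_prime_pow_mul_sub_one {p : ℕ} (hp : p.Prime) (k : ℕ) :
    (σ 1 (p ^ k) : ℤ) * (p - 1) = (p : ℤ) ^ (k + 1) - 1 := by
  rw [sigma_one_apply_prime_pow hp]
  push_cast
  exact geom_sum_mul _ _

theorem mul_prime_pow_eq_of_mul_sigma_one_eq {p : ℕ} (hp : p.Prime) {a b : ℤ} (k : ℕ)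
    (h : a * (σ 1 (p ^ (k + 1)) : ℤ) = b * (p : ℤ) ^ (k + 1) + a) :
    ((a - b) * p + b) * (p : ℤ) ^ k = a := by
  have hσ := sigma_one_prime_pow_mul_sub_one hp (k + 1)
  have hp0 : (p : ℤ) ≠ 0 := by exact_mod_cast hp.ne_zero
  refine mul_left_cancel₀ hp0 ?_
  linear_combination (p - 1 : ℤ) * h - a * hσ

theorem not_dvd_mul_add_of_not_dvd {R : Type*} [CommRing R] {p c b : R} (hb : ¬p ∣ b) :
    ¬p ∣ c * p + b := by
  rwa [dvd_add_right (dvd_mul_left p c)]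

theorem Int.not_dvd_of_dvd_of_gcd_eq_one {p : ℕ} (hp : p.Prime) {a b : ℤ} (hab : Int.gcd a b = 1)
    (ha : (p : ℤ) ∣ a) : ¬(p : ℤ) ∣ b := fun hb => by
  have := Int.dvd_coe_gcd ha hb
  rw [hab, Int.natCast_dvd_natCast] at this
  exact hp.not_dvd_one this

theorem padicValInt_mul_prime_pow_of_not_dvd {p : ℕ} [Fact p.Prime] {c : ℤ} (hc : ¬(p : ℤ) ∣ c)
    (n : ℕ) : padicValInt p (c * (p : ℤ) ^ n) = n := by
  have hc0 : c ≠ 0 := by rintro rfl; exact hc (dvd_zero _)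
  have hp0 : (p : ℤ) ^ n ≠ 0 := pow_ne_zero _ (by exact_mod_cast (Fact.out : p.Prime).ne_zero)
  rw [padicValInt.mul hc0 hp0, padicValInt.eq_zero_of_not_dvd hc, zero_add,
    ← Nat.cast_pow, padicValInt.of_nat, padicValNat.prime_pow]

open ArithmeticFunction in
open scoped ArithmeticFunction.sigma in
/-- If `gcd(a,b) = 1`, `p` is prime, `k ≥ 2`, and `a * σ(p^k) = b * p^k + a`, then
`((a-b)*p + b) * p^(k-1) = a`; in particular `p^(k-1) ∣ a` and `ν_p(a) = k - 1`. -/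
theorem sigma_prime_pow_eq_case_a_eq_c (a b : ℤ) (hab : Int.gcd a b = 1)
    (p : ℕ) (hp : p.Prime) (k : ℕ) (hk : 2 ≤ k)
    (h : a * (σ 1 (p ^ k) : ℤ) = b * (p : ℤ) ^ k + a) :
    ((a - b) * p + b) * (p : ℤ) ^ (k - 1) = a ∧
      (p : ℤ) ^ (k - 1) ∣ a ∧ padicValInt p a = k - 1 := by
  have : Fact p.Prime := ⟨hp⟩
  obtain ⟨m, rfl⟩ : ∃ m, k = m + 1 + 1 := ⟨k - 2, by omega⟩
  have key := mul_prime_pow_eq_of_mul_sigma_one_eq hp (m + 1) h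
  have hpa : (p : ℤ) ∣ a := key ▸ (dvd_pow_self _ m.succ_ne_zero).mul_left _
  have hpc := not_dvd_mul_add_of_not_dvd (c := a - b) (Int.not_dvd_of_dvd_of_gcd_eq_one hp hab hpa)
  refine ⟨key, key ▸ dvd_mul_left _ _, ?_⟩
  rw [← key]
  exact padicValInt_mul_prime_pow_of_not_dvd hpc _
end

section
/- Let a, b, c be integers with a ≠ b and a² = (a - b)(a - c), and let p, q be distinct primes satisfying a · σ(p·q) = b·p·q + c. Then (a - b)·p + a = 0 or (a - b)·q + a = 0; in particular b - a divides a and p = a/(b - a) or q = a/(b - a). -/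
/-!
Since `σ(pq) = (p + 1)(q + 1)`, the equation is quadratic in `p` and `q`, and with
`A = a - b` one has the identity
`(A p + a)(A q + a) = A (a σ(pq) - b p q - c) + (a² - A (a - c))`.
Both brackets vanish, so one of the factors `A p + a`, `A q + a` is zero.
-/

namespace ArithmeticFunction

open ArithmeticFunction.sigma

theorem sigma_one_apply_prime {p : ℕ} (hp : p.Prime) : σ 1 p = p + 1 := by
  simpa [Finset.sum_range_succ, add_comm] using sigma_one_apply_prime_pow (i := 1) hp

theorem sigma_one_mul_of_prime_ne {p q : ℕ} (hp : p.Prime) (hq : q.Prime)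
    (hpq : p ≠ q) : σ 1 (p * q) = (p + 1) * (q + 1) := by
  rw [isMultiplicative_sigma.map_mul_of_coprime ((Nat.coprime_primes hp hq).mpr hpq),
    sigma_one_apply_prime hp, sigma_one_apply_prime hq]

end ArithmeticFunction

theorem sub_mul_add_eq_zero_or_sub_mul_add_eq_zero {R : Type*} [CommRing R] [NoZeroDivisors R]
    {a b c p q : R}
    (hdeg : a ^ 2 = (a - b) * (a - c)) (h : a * ((p + 1) * (q + 1)) = b * (p * q) + c) :
    (a - b) * p + a = 0 ∨ (a - b) * q + a = 0 :=
  mul_eq_zero.mp <| by linear_combination (a - b) * h + hdeg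

theorem Int.dvd_and_eq_ediv_of_mul_add_eq_zero {a b n : ℤ} (hab : a ≠ b)
    (h : (a - b) * n + a = 0) : (b - a) ∣ a ∧ n = a / (b - a) := by
  have ha : a = n * (b - a) := by linear_combination h
  exact ⟨Dvd.intro_left n ha.symm,
    (Int.ediv_eq_of_eq_mul_left (sub_ne_zero.mpr hab.symm) ha).symm⟩

open ArithmeticFunction ArithmeticFunction.sigma in
/-- Degenerate case `B² - AC = 0` of the two-prime shortcut: if `a ≠ b`,
`a² = (a-b)*(a-c)`, and distinct primes `p, q` satisfy `a * σ(p*q) = b*p*q + c`, then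
`(a-b)*p + a = 0` or `(a-b)*q + a = 0`; in particular `b - a` divides `a` and
`p = a/(b-a)` or `q = a/(b-a)`. -/
theorem sigma_mul_two_primes_degenerate (a b c : ℤ) (hab : a ≠ b)
    (hdeg : a ^ 2 = (a - b) * (a - c)) (p q : ℕ) (hp : p.Prime) (hq : q.Prime)
    (hpq : p ≠ q) (h : a * (σ 1 (p * q) : ℤ) = b * (p * q : ℕ) + c) :
    ((a - b) * p + a = 0 ∨ (a - b) * q + a = 0) ∧
      (b - a) ∣ a ∧ ((p : ℤ) = a / (b - a) ∨ (q : ℤ) = a / (b - a)) := by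
  rw [sigma_one_mul_of_prime_ne hp hq hpq] at h
  push_cast at h
  have hroot := sub_mul_add_eq_zero_or_sub_mul_add_eq_zero hdeg h
  refine ⟨hroot, ?_⟩
  rcases hroot with hp' | hq'
  · exact (Int.dvd_and_eq_ediv_of_mul_add_eq_zero hab hp').imp_right .inl
  · exact (Int.dvd_and_eq_ediv_of_mul_add_eq_zero hab hq').imp_right .inr
end

section
/- Let a, b, c be integers and let n be a positive integer that is a perfect square and satisfies a · σ(n) = b·n + c. Let p be a prime with t := ν_p(n) ≥ 1, and let q be a prime dividing σ(p^t). Then -b·c is a square modulo q, i.e., there exists an integer x with x² ≡ -b·c (mod q). -/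
namespace ArithmeticFunction

theorem IsMultiplicative.map_ordProj_dvd {R : Type*} [CommSemiring R] {f : ArithmeticFunction R}
    (hf : f.IsMultiplicative) (n p : ℕ) : f (p ^ n.factorization p) ∣ f n := by
  rcases eq_or_ne n 0 with rfl | hn
  · simp
  by_cases hp : p.Prime
  · conv_rhs => rw [← Nat.ordProj_mul_ordCompl_eq_self n p]
    rw [hf.map_mul_of_coprime ((Nat.coprime_ordCompl hp hn).pow_left _)]
    exact dvd_mul_right _ _
  · simp [Nat.factorization_eq_zero_of_not_prime n hp, hf.map_one]

end ArithmeticFunction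

theorem Int.exists_sq_modEq_neg_mul_of_dvd {b c n q : ℤ} (hn : IsSquare n) (hq : q ∣ b * n + c) :
    ∃ x : ℤ, x ^ 2 ≡ -(b * c) [ZMOD q] := by
  obtain ⟨m, rfl⟩ := hn
  refine ⟨b * m, Int.modEq_iff_dvd.mpr ?_⟩
  have key : -(b * c) - (b * m) ^ 2 = -(b * (b * (m * m) + c)) := by ring
  exact key ▸ (hq.mul_left b).neg_right

open ArithmeticFunction ArithmeticFunction.sigma in
theorem neg_mul_sq_residue_of_square_solution_general (a b c : ℤ) (n : ℕ)
    (hsq : IsSquare n) (h : a * (σ 1 n : ℤ) = b * n + c)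
    (p : ℕ)
    (q : ℕ) (hqdvd : q ∣ σ 1 (p ^ n.factorization p)) :
    ∃ x : ℤ, x ^ 2 ≡ -(b * c) [ZMOD q] := by
  have hq_sigma : (q : ℤ) ∣ σ 1 n :=
    Int.natCast_dvd_natCast.mpr (hqdvd.trans (isMultiplicative_sigma.map_ordProj_dvd n p))
  have hsq_int : IsSquare (n : ℤ) := hsq.map (Nat.castRingHom ℤ)
  exact Int.exists_sq_modEq_neg_mul_of_dvd hsq_int (h ▸ hq_sigma.mul_left a)

open ArithmeticFunction ArithmeticFunction.sigma in
/-- If `n` is a positive perfect square with `a * σ(n) = b*n + c`, `p` is a prime with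
`t := ν_p(n) ≥ 1`, and `q` is a prime dividing `σ(p^t)`, then `-b*c` is a square mod `q`. -/
theorem neg_mul_sq_residue_of_square_solution (a b c : ℤ) (n : ℕ) (hn : 0 < n)
    (hsq : IsSquare n) (h : a * (σ 1 n : ℤ) = b * n + c)
    (p : ℕ) (hp : p.Prime) (ht : 1 ≤ n.factorization p)
    (q : ℕ) (hq : q.Prime) (hqdvd : q ∣ σ 1 (p ^ n.factorization p)) :
    ∃ x : ℤ, x ^ 2 ≡ -(b * c) [ZMOD q] :=
  neg_mul_sq_residue_of_square_solution_general a b c n hsq h p q hqdvd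
end

section
/- There is no even positive integer n satisfying σ(n) = 2n + 1; consequently every positive integer n with σ(n) = 2n + 1 is an odd perfect square. -/
/-!
For an odd prime `p`, `σ(p^k)` is a sum of `k + 1` odd terms, so it is odd exactly when `k` is even;
by multiplicativity an odd `m` with `σ(m)` odd is a square. If `n = 2^a m` with `a ≥ 1`
and `m` odd were quasiperfect, then `σ(n) = (2^(a+1) - 1) σ(m)` forces `m = s^2`, and
`q = 2^(a+1) - 1 ≡ 3 (mod 4)` divides `2n + 1 = 2^(a+1) s^2 + 1 ≡ s^2 + 1 (mod q)`. But a divisor of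
`s^2 + 1` is a sum of two squares, hence never `≡ 3 (mod 4)`.
-/

open ArithmeticFunction ArithmeticFunction.sigma

namespace Nat

theorem odd_sigma_one_prime_pow_iff {p k : ℕ} (hp : p.Prime) (hpo : Odd p) :
    Odd (σ 1 (p ^ k)) ↔ Even k := by
  rw [sigma_one_apply_prime_pow hp]
  induction k with
  | zero => simp
  | succ k ih =>
    rw [Finset.sum_range_succ, Nat.odd_add, ih, Nat.even_add_one]
    simp [Nat.not_even_iff_odd.2 (hpo.pow (n := k + 1))]

theorem isSquare_of_odd_of_odd_sigma_one {m : ℕ} (hm : Odd m) (hσ : Odd (σ 1 m)) :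
    IsSquare m := by
  induction m using recOnPosPrimePosCoprime with
  | zero => exact absurd hm (by decide)
  | one => exact IsSquare.one
  | prime_pow p k hp _ =>
    have hpo : Odd p := hm.of_dvd_nat (dvd_pow_self p (by omega))
    exact ((odd_sigma_one_prime_pow_iff hp hpo).1 hσ).isSquare_pow p
  | coprime a b _ _ hab iha ihb =>
    rw [isMultiplicative_sigma.map_mul_of_coprime hab, Nat.odd_mul] at hσ
    rw [Nat.odd_mul] at hm
    exact (iha hm.1 hσ.1).mul (ihb hm.2 hσ.2)

theorem sigma_one_two_pow_add_one (a : ℕ) : σ 1 (2 ^ a) + 1 = 2 ^ (a + 1) := by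
  rw [sigma_one_apply_prime_pow prime_two, geomSum_eq le_rfl, Nat.div_one]
  exact Nat.sub_add_cancel Nat.one_le_two_pow

theorem mod_four_ne_three_of_dvd_sq_add_one {q s : ℕ} (h : q ∣ s ^ 2 + 1) : q % 4 ≠ 3 := by
  have hs : IsSquare (-1 : ZMod (s ^ 2 + 1)) :=
    ⟨s, by have := ZMod.natCast_self (s ^ 2 + 1); push_cast at this; linear_combination -this⟩
  obtain ⟨x, y, rfl⟩ := eq_sq_add_sq_of_isSquare_mod_neg_one (ZMod.isSquare_neg_one_of_dvd h hs)
  rw [Nat.add_mod, Nat.pow_mod, Nat.pow_mod y]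
  have hx := Nat.mod_lt x (show 4 > 0 by norm_num)
  have hy := Nat.mod_lt y (show 4 > 0 by norm_num)
  interval_cases x % 4 <;> interval_cases y % 4 <;> decide

theorem not_even_of_sigma_one_eq_two_mul_add_one {n : ℕ} (h : σ 1 n = 2 * n + 1) : ¬Even n := by
  intro hn
  have hn0 : n ≠ 0 := by rintro rfl; simp at h
  obtain ⟨a, m, hm, rfl⟩ := exists_eq_two_pow_mul_odd hn0
  have ha : a ≠ 0 := by rintro rfl; simp [← Nat.not_odd_iff_even, hm] at hn
  set q := σ 1 (2 ^ a)
  have hq1 : q + 1 = 2 ^ (a + 1) := sigma_one_two_pow_add_one a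
  have hσ : q * σ 1 m = 2 * (2 ^ a * m) + 1 := by
    rw [← h, isMultiplicative_sigma.map_mul_of_coprime (hm.coprime_two_right.symm.pow_left a)]
  obtain ⟨s, rfl⟩ := isSquare_of_odd_of_odd_sigma_one hm
    (Nat.odd_mul.1 (hσ ▸ odd_two_mul_add_one _)).2
  have hdvd : q ∣ s ^ 2 + 1 := by
    have hsplit : 2 * (2 ^ a * (s * s)) + 1 = q * s ^ 2 + (s ^ 2 + 1) := by
      rw [show 2 * (2 ^ a * (s * s)) = (q + 1) * s ^ 2 by rw [hq1]; ring]
      ring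
    have : q ∣ q * s ^ 2 + (s ^ 2 + 1) := hsplit ▸ hσ ▸ dvd_mul_right q _
    exact (Nat.dvd_add_right (dvd_mul_right q _)).1 this
  have hq4 : q % 4 = 3 := by
    obtain ⟨b, rfl⟩ := Nat.exists_eq_succ_of_ne_zero ha
    have : 2 ^ (b + 1 + 1) = 4 * 2 ^ b := by ring
    omega
  exact mod_four_ne_three_of_dvd_sq_add_one hdvd hq4

end Nat

open ArithmeticFunction ArithmeticFunction.sigma in
/-- No even positive integer `n` satisfies `σ(n) = 2n + 1`; consequently every positive
integer `n` with `σ(n) = 2n + 1` (a quasiperfect number) is an odd perfect square. -/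
theorem quasiperfect_not_even_and_odd_square :
    (¬ ∃ n : ℕ, 0 < n ∧ Even n ∧ σ 1 n = 2 * n + 1) ∧
      ∀ n : ℕ, 0 < n → σ 1 n = 2 * n + 1 → Odd n ∧ IsSquare n := by
  refine ⟨fun ⟨n, _, hn, h⟩ ↦ Nat.not_even_of_sigma_one_eq_two_mul_add_one h hn, fun n _ h ↦ ?_⟩
  have hodd : Odd n := Nat.not_even_iff_odd.1 (Nat.not_even_of_sigma_one_eq_two_mul_add_one h)
  exact ⟨hodd, Nat.isSquare_of_odd_of_odd_sigma_one hodd (h ▸ odd_two_mul_add_one n)⟩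
end
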